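/- For every n ≥ 0, the polynomial S_n defined by the recursion S_{n+1}(x) = S_n(x) − (x²/((2n+3)(2n+5))) S_{n−1}(x) with S_{−1}(x) = S_0(x) = 1 satisfies the closed form S_n(x) = −(π x^{n+3/2} / (Γ(n+5/2) 2^{n+5/2})) · (cos(x) J_{n+5/2}(x) + sin(x) Y_{n+5/2}(x)) for all real x > 0. -/

import Mathlib

/-!
Both `J_ν` and `Y_ν` satisfy the three-term recurrence `J_{ν-1} + J_{ν+1} = (2ν/x) J_ν`; for `J`
this is checked on the series termwise, using `1/Γ(s) = s/Γ(s+1)`, which holds for every real `s`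
with Mathlib's convention `Γ(-n) = 0`, so no restriction on `ν` is needed. Hence
`W_ν = cos x J_ν + sin x Y_ν` satisfies it too, and multiplying by the prefactor
`-π x^{ν-1} / (Γ(ν) 2^ν)` turns it into the recursion for `S_n` (at `ν = n + 5/2`). The two
initial values come from `J_{1/2} = √(2/(πx)) sin x` and `J_{-1/2} = √(2/(πx)) cos x` (the sine and
cosine series, after Legendre's duplication formula), which give `W_{1/2} = 0` and
`W_{-1/2} = √(2/(πx))`.
-/

open Real

/-- Bessel function of the first kind of real order `ν` (for `x > 0`), via its series. -/
noncomputable def besselJ (ν x : ℝ) : ℝ :=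
  ∑' k : ℕ, (-1) ^ k / ((k.factorial : ℝ) * Real.Gamma ((k : ℝ) + ν + 1)) *
    (x / 2) ^ (2 * (k : ℝ) + ν)

/-- Bessel function of the second kind of real (non-integer) order `ν`. -/
noncomputable def besselY (ν x : ℝ) : ℝ :=
  (besselJ ν x * Real.cos (ν * π) - besselJ (-ν) x) / Real.sin (ν * π)

theorem Real.inv_Gamma_eq_self_mul_inv_Gamma_add_one (s : ℝ) :
    (Gamma s)⁻¹ = s * (Gamma (s + 1))⁻¹ := by
  rcases ne_or_eq s 0 with h | rfl
  · rw [Gamma_add_one h, mul_inv, mul_inv_cancel_left₀ h]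
  · rw [zero_add, Gamma_zero, inv_zero, zero_mul]

theorem Real.factorial_mul_Gamma_nat_add_half (k : ℕ) :
    (k.factorial : ℝ) * Gamma (k + 1 / 2) = (2 * k).factorial * √π / 2 ^ (2 * k) := by
  have h := Gamma_mul_Gamma_add_half (k + 1 / 2)
  rw [show (k : ℝ) + 1 / 2 + 1 / 2 = k + 1 by ring, Gamma_nat_eq_factorial,
    show 2 * ((k : ℝ) + 1 / 2) = ((2 * k : ℕ) : ℝ) + 1 by push_cast; ring,
    Gamma_nat_eq_factorial,
    show 1 - (((2 * k : ℕ) : ℝ) + 1) = -((2 * k : ℕ) : ℝ) by ring,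
    rpow_neg two_pos.le, rpow_natCast] at h
  rw [mul_comm, h, div_eq_mul_inv]; ring

theorem Real.factorial_mul_Gamma_nat_add_three_halves (k : ℕ) :
    (k.factorial : ℝ) * Gamma (k + 3 / 2) = (2 * k + 1).factorial * √π / 2 ^ (2 * k + 1) := by
  have h := Gamma_mul_Gamma_add_half (k + 1)
  rw [show (k : ℝ) + 1 + 1 / 2 = k + 3 / 2 by ring, Gamma_nat_eq_factorial,
    show 2 * ((k : ℝ) + 1) = ((2 * k + 1 : ℕ) : ℝ) + 1 by push_cast; ring,
    Gamma_nat_eq_factorial,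
    show 1 - (((2 * k + 1 : ℕ) : ℝ) + 1) = -((2 * k + 1 : ℕ) : ℝ) by ring,
    rpow_neg two_pos.le, rpow_natCast] at h
  rw [h, div_eq_mul_inv]; ring

theorem Real.summable_pow_div_factorial_mul_Gamma (y ν : ℝ) :
    Summable fun k : ℕ => y ^ k / (k.factorial * Gamma (k + ν + 1)) := by
  obtain ⟨K, hK⟩ := exists_nat_ge (1 - ν)
  have hΓK : 0 < Gamma (K + ν + 1) := Gamma_pos_of_pos (by linarith)
  refine ((summable_pow_div_factorial |y|).div_const (Gamma (K + ν + 1))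
    ).of_norm_bounded_eventually_nat ?_
  filter_upwards [Filter.eventually_ge_atTop K] with k hk
  have hkK : (K : ℝ) ≤ k := by exact_mod_cast hk
  have hΓ : Gamma (K + ν + 1) ≤ Gamma (k + ν + 1) :=
    Gamma_strictMonoOn_Ici.monotoneOn (by simp; linarith) (by simp; linarith) (by linarith)
  rw [norm_div, norm_mul, norm_pow, Real.norm_eq_abs, Real.norm_of_nonneg (by positivity),
    Real.norm_of_nonneg (by linarith), div_div]
  gcongr

noncomputable def besselJTerm (ν x : ℝ) (k : ℕ) : ℝ :=
  (-1) ^ k / ((k.factorial : ℝ) * Gamma ((k : ℝ) + ν + 1)) * (x / 2) ^ (2 * (k : ℝ) + ν)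

theorem besselJ_eq_tsum (ν x : ℝ) : besselJ ν x = ∑' k, besselJTerm ν x k := rfl

section
variable {ν x : ℝ}

theorem besselJTerm_eq_mul_pow_div (hx : 0 < x) (k : ℕ) :
    besselJTerm ν x k =
      (x / 2) ^ ν * ((-(x / 2) ^ 2) ^ k / (k.factorial * Gamma (k + ν + 1))) := by
  rw [besselJTerm, rpow_add (by positivity), rpow_mul (by positivity), rpow_natCast, rpow_two,
    neg_pow ((x / 2) ^ 2)]
  ring

theorem summable_besselJTerm (hx : 0 < x) : Summable (besselJTerm ν x) := by
  rw [show besselJTerm ν x = _ from funext (besselJTerm_eq_mul_pow_div hx)]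
  exact (summable_pow_div_factorial_mul_Gamma _ ν).mul_left _

theorem besselJTerm_sub_one_zero (hx : 0 < x) :
    besselJTerm (ν - 1) x 0 = 2 * ν / x * besselJTerm ν x 0 := by
  simp only [besselJTerm_eq_mul_pow_div hx, pow_zero, Nat.factorial_zero, Nat.cast_one,
    Nat.cast_zero, zero_add, one_mul, one_div, sub_add_cancel]
  rw [rpow_sub_one (by positivity), inv_Gamma_eq_self_mul_inv_Gamma_add_one ν]
  field_simp

theorem besselJTerm_sub_one_succ_add (hx : 0 < x) (k : ℕ) :
    besselJTerm (ν - 1) x (k + 1) + besselJTerm (ν + 1) x k =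
      2 * ν / x * besselJTerm ν x (k + 1) := by
  simp only [besselJTerm_eq_mul_pow_div hx]
  rw [rpow_sub_one (by positivity), rpow_add_one (by positivity), Nat.factorial_succ]
  push_cast
  rw [show (k : ℝ) + 1 + (ν - 1) + 1 = k + ν + 1 by ring,
    show (k : ℝ) + (ν + 1) + 1 = k + ν + 1 + 1 by ring,
    show (k : ℝ) + 1 + ν + 1 = k + ν + 1 + 1 by ring]
  simp only [div_eq_mul_inv, mul_inv]
  rw [inv_Gamma_eq_self_mul_inv_Gamma_add_one (k + ν + 1)]
  field_simp
  ring

theorem besselJ_sub_one_add_besselJ_add_one (hx : 0 < x) :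
    besselJ (ν - 1) x + besselJ (ν + 1) x = 2 * ν / x * besselJ ν x := by
  have hshift (μ : ℝ) :
      ∑' k, besselJTerm μ x k = besselJTerm μ x 0 + ∑' k, besselJTerm μ x (k + 1) :=
    (summable_besselJTerm hx).tsum_eq_zero_add
  rw [besselJ_eq_tsum, besselJ_eq_tsum, besselJ_eq_tsum, hshift (ν - 1), hshift ν, add_assoc,
    ← ((summable_nat_add_iff 1).mpr (summable_besselJTerm hx)).tsum_add (summable_besselJTerm hx),
    besselJTerm_sub_one_zero hx, mul_add, ← tsum_mul_left]
  simp only [besselJTerm_sub_one_succ_add hx]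

theorem besselY_sub_one_add_besselY_add_one (hx : 0 < x) :
    besselY (ν - 1) x + besselY (ν + 1) x = 2 * ν / x * besselY ν x := by
  have hJ := besselJ_sub_one_add_besselJ_add_one (ν := ν) hx
  have hJneg := besselJ_sub_one_add_besselJ_add_one (ν := -ν) hx
  simp only [besselY, sub_mul, add_mul, one_mul, cos_sub_pi, cos_add_pi, sin_sub_pi, sin_add_pi,
    neg_sub', neg_add', sub_neg_eq_add]
  linear_combination (cos (ν * π) / sin (ν * π)) * hJ + (1 / sin (ν * π)) * hJneg

theorem besselJTerm_eq_of_factorial_mul_Gamma (hx : 0 < x) {k m : ℕ}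
    (hm : (m : ℝ) = 2 * k + ν + 1 / 2)
    (hΓ : (k.factorial : ℝ) * Gamma (k + ν + 1) = m.factorial * √π / 2 ^ m) :
    besselJTerm ν x k = √(2 / (π * x)) * ((-1) ^ k * x ^ m / m.factorial) := by
  rw [besselJTerm, hΓ, show 2 * (k : ℝ) + ν = m - 1 / 2 by linarith, rpow_sub (by positivity),
    rpow_natCast, ← sqrt_eq_rpow, div_pow,
    show 2 / (π * x) = (π * (x / 2))⁻¹ by field_simp, sqrt_inv, sqrt_mul pi_pos.le]
  field_simp

theorem besselJ_one_half (hx : 0 < x) : besselJ (1 / 2) x = √(2 / (π * x)) * sin x := by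
  have hterm (k : ℕ) : besselJTerm (1 / 2) x k =
      √(2 / (π * x)) * ((-1) ^ k * x ^ (2 * k + 1) / (2 * k + 1).factorial) := by
    refine besselJTerm_eq_of_factorial_mul_Gamma hx (by push_cast; ring) ?_
    rw [← factorial_mul_Gamma_nat_add_three_halves]
    ring_nf
  rw [besselJ_eq_tsum, tsum_congr hterm]
  exact ((hasSum_sin x).mul_left _).tsum_eq

theorem besselJ_neg_one_half (hx : 0 < x) : besselJ (-(1 / 2)) x = √(2 / (π * x)) * cos x := by
  have hterm (k : ℕ) : besselJTerm (-(1 / 2)) x k =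
      √(2 / (π * x)) * ((-1) ^ k * x ^ (2 * k) / (2 * k).factorial) := by
    refine besselJTerm_eq_of_factorial_mul_Gamma hx (by push_cast; ring) ?_
    rw [← factorial_mul_Gamma_nat_add_half]
    ring_nf
  rw [besselJ_eq_tsum, tsum_congr hterm]
  exact ((hasSum_cos x).mul_left _).tsum_eq

theorem besselY_one_half (x : ℝ) : besselY (1 / 2) x = -besselJ (-(1 / 2)) x := by
  rw [besselY, one_div_mul_eq_div, cos_pi_div_two, sin_pi_div_two]
  ring

theorem besselY_neg_one_half (x : ℝ) : besselY (-(1 / 2)) x = besselJ (1 / 2) x := by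
  rw [besselY, neg_mul, one_div_mul_eq_div, cos_neg, sin_neg, cos_pi_div_two, sin_pi_div_two,
    neg_neg]
  ring

end

noncomputable def besselCosSin (ν x : ℝ) : ℝ := cos x * besselJ ν x + sin x * besselY ν x

noncomputable def closedFormCoeff (ν x : ℝ) : ℝ := -(π * x ^ (ν - 1) / (Gamma ν * 2 ^ ν))

-- The paper's `S_n(x)` is `closedForm (n + 5/2) x`.
noncomputable def closedForm (ν x : ℝ) : ℝ := closedFormCoeff ν x * besselCosSin ν x

section
variable {ν x : ℝ}

theorem besselCosSin_add_one (hx : 0 < x) :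
    besselCosSin (ν + 1) x = 2 * ν / x * besselCosSin ν x - besselCosSin (ν - 1) x := by
  rw [besselCosSin, besselCosSin, besselCosSin]
  linear_combination cos x * besselJ_sub_one_add_besselJ_add_one (ν := ν) hx +
    sin x * besselY_sub_one_add_besselY_add_one (ν := ν) hx

theorem besselCosSin_one_half (hx : 0 < x) : besselCosSin (1 / 2) x = 0 := by
  rw [besselCosSin, besselY_one_half, besselJ_one_half hx, besselJ_neg_one_half hx]
  ring

theorem besselCosSin_neg_one_half (hx : 0 < x) :
    besselCosSin (-(1 / 2)) x = √(2 / (π * x)) := by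
  rw [besselCosSin, besselY_neg_one_half, besselJ_one_half hx, besselJ_neg_one_half hx]
  linear_combination √(2 / (π * x)) * sin_sq_add_cos_sq x

theorem closedFormCoeff_add_one (hν : 0 < ν) (hx : 0 < x) :
    closedFormCoeff (ν + 1) x = x / (2 * ν) * closedFormCoeff ν x := by
  rw [closedFormCoeff, closedFormCoeff, add_sub_cancel_right, rpow_sub_one hx.ne',
    Gamma_add_one hν.ne', rpow_add_one two_ne_zero]
  have hΓ := (Gamma_pos_of_pos hν).ne'
  field_simp

theorem closedForm_add_one (hν : 0 < ν) (hx : 0 < x) :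
    closedForm (ν + 1) x =
      closedForm ν x - closedFormCoeff (ν + 1) x * besselCosSin (ν - 1) x := by
  rw [closedForm, closedForm, besselCosSin_add_one hx, closedFormCoeff_add_one hν hx]
  field_simp

theorem closedForm_add_two (hν : 0 < ν) (hx : 0 < x) :
    closedForm (ν + 2) x =
      closedForm (ν + 1) x - x ^ 2 / (2 * ν * (2 * ν + 2)) * closedForm ν x := by
  rw [show ν + 2 = ν + 1 + 1 by ring, closedForm_add_one (by positivity) hx, add_sub_cancel_right,
    closedFormCoeff_add_one (by positivity) hx, closedFormCoeff_add_one hν hx]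
  unfold closedForm
  field_simp

theorem closedForm_three_halves (hx : 0 < x) : closedForm (3 / 2) x = 1 := by
  have hW := besselCosSin_add_one (ν := 1 / 2) hx
  rw [besselCosSin_one_half hx, show (1 / 2 : ℝ) - 1 = -(1 / 2) by norm_num,
    besselCosSin_neg_one_half hx, mul_zero, zero_sub] at hW
  rw [closedForm, closedFormCoeff, show (3 / 2 : ℝ) = 1 / 2 + 1 by norm_num, hW,
    Gamma_add_one (by norm_num), Gamma_one_half_eq, rpow_add_one two_ne_zero, add_sub_cancel_right,
    ← sqrt_eq_rpow, ← sqrt_eq_rpow, sqrt_div zero_le_two, sqrt_mul pi_pos.le]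
  have hsx : 0 < √x := sqrt_pos.mpr hx
  field_simp
  rw [sq_sqrt pi_pos.le]

theorem closedForm_five_halves (hx : 0 < x) : closedForm (5 / 2) x = 1 := by
  rw [show (5 / 2 : ℝ) = 3 / 2 + 1 by norm_num, closedForm_add_one (by norm_num) hx,
    show (3 / 2 : ℝ) - 1 = 1 / 2 by norm_num, besselCosSin_one_half hx, mul_zero, sub_zero,
    closedForm_three_halves hx]

end

/-- The polynomials `S_n` defined by `S_{n+1}(x) = S_n(x) − (x²/((2n+3)(2n+5))) S_{n−1}(x)`
with `S_{−1} = S_0 = 1` (encoded as `T (n+1) x = S_n(x)`) satisfy the closed form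
`S_n(x) = −(π x^{n+3/2} / (Γ(n+5/2) 2^{n+5/2})) (cos x J_{n+5/2}(x) + sin x Y_{n+5/2}(x))`
for all `x > 0`. -/
theorem S_closed_form (T : ℕ → ℝ → ℝ)
    (hT0 : ∀ x, T 0 x = 1) (hT1 : ∀ x, T 1 x = 1)
    (hTrec : ∀ (n : ℕ) (x : ℝ),
      T (n + 2) x = T (n + 1) x - x ^ 2 / ((2 * (n : ℝ) + 3) * (2 * (n : ℝ) + 5)) * T n x) :
    ∀ (n : ℕ) (x : ℝ), 0 < x →
      T (n + 1) x = -(π * x ^ ((n : ℝ) + 3 / 2) /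
          (Real.Gamma ((n : ℝ) + 5 / 2) * (2 : ℝ) ^ ((n : ℝ) + 5 / 2))) *
        (Real.cos x * besselJ ((n : ℝ) + 5 / 2) x + Real.sin x * besselY ((n : ℝ) + 5 / 2) x) := by
  intro n x hx
  have hT (k : ℕ) : T k x = closedForm (k + 3 / 2) x := by
    induction k using Nat.twoStepInduction with
    | zero => rw [hT0, Nat.cast_zero, zero_add, closedForm_three_halves hx]
    | one => rw [hT1, Nat.cast_one, show (1 : ℝ) + 3 / 2 = 5 / 2 by norm_num,
        closedForm_five_halves hx]
    | more k ih0 ih1 =>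
      rw [hTrec, ih0, ih1, show ((k + 2 : ℕ) : ℝ) + 3 / 2 = k + 3 / 2 + 2 by push_cast; ring,
        closedForm_add_two (by positivity) hx, Nat.cast_succ, add_right_comm]
      ring
  rw [hT, show ((n + 1 : ℕ) : ℝ) + 3 / 2 = n + 5 / 2 by push_cast; ring, closedForm,
    closedFormCoeff, besselCosSin, show (n : ℝ) + 5 / 2 - 1 = n + 3 / 2 by ring]
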